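/- For every x ∈ ℝⁿ, the curvature components satisfy R₍₃,₁,₁₎(x) = −e₄, R₍₁,₃,₁₎(x) = e₄, R₍₃,₁,₃₎(x) = e₂, R₍₁,₃,₃₎(x) = −e₂, and R₍ᵢ,ⱼ,ₖ₎(x) = 0 for every other triple (i,j,k). In particular, the curvature tensor of g₀ is nonzero at every point of ℝⁿ, so g₀ is not flat. -/

import Mathlib

/-!
Each Christoffel vector `Γᵢⱼ(x)` is linear in `x` (it depends on `x₃` only), so
`∂ₖΓᵢⱼ(x) = Γᵢⱼ(eₖ)`. Its only components are along `e₂` and `e₄`, while `Γᵢ₂ = Γᵢ₄ = 0`, so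
every quadratic term of the curvature vanishes and `R₍ᵢ,ⱼ,ₖ₎ = Γⱼₖ(eᵢ) − Γᵢₖ(eⱼ)`.
-/

/-- The `i`-th standard basis vector `eᵢ` of `ℝⁿ` (0-based). -/
def stdBasis (n : ℕ) (i : Fin n) : Fin n → ℝ := fun k => if k = i then 1 else 0

/-- The Christoffel vectors of `g₀`: `Γ₁₁(x) = -x₃ e₄`, `Γ₁₃(x) = Γ₃₁(x) = x₃ e₂`,
and `Γᵢⱼ(x) = 0` otherwise (1-based indices; here `i j` are 0-based, so
`Γ₀₀(x) = -x₂e₃` and `Γ₀₂(x) = Γ₂₀(x) = x₂e₁`). -/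
def Gamma (n : ℕ) (hn : 4 ≤ n) (i j : Fin n) (x : Fin n → ℝ) : Fin n → ℝ :=
  fun k =>
    if (i : ℕ) = 0 ∧ (j : ℕ) = 0 ∧ (k : ℕ) = 3 then -x ⟨2, by omega⟩
    else if (((i : ℕ) = 0 ∧ (j : ℕ) = 2) ∨ ((i : ℕ) = 2 ∧ (j : ℕ) = 0)) ∧ (k : ℕ) = 1 then
      x ⟨2, by omega⟩
    else 0

/-- The curvature components
`R₍ᵢ,ⱼ,ₖ₎(x) = ∂ᵢΓⱼₖ(x) − ∂ⱼΓᵢₖ(x) + Σₘ (Γⱼₖ(x))ₘ Γᵢₘ(x) − Σₘ (Γᵢₖ(x))ₘ Γⱼₘ(x)`. -/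
noncomputable def Rcurv (n : ℕ) (hn : 4 ≤ n) (i j k : Fin n) (x : Fin n → ℝ) :
    Fin n → ℝ :=
  fun l =>
    fderiv ℝ (fun y => Gamma n hn j k y l) x (stdBasis n i)
    - fderiv ℝ (fun y => Gamma n hn i k y l) x (stdBasis n j)
    + ∑ m : Fin n, Gamma n hn j k x m * Gamma n hn i m x l
    - ∑ m : Fin n, Gamma n hn i k x m * Gamma n hn j m x l

namespace Gamma

variable {n : ℕ} (hn : 4 ≤ n)

theorem apply_eq_mul (i j : Fin n) (y : Fin n → ℝ) (l : Fin n) :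
    Gamma n hn i j y l = y ⟨2, by omega⟩ * Gamma n hn i j (stdBasis n ⟨2, by omega⟩) l := by
  simp only [Gamma, stdBasis]
  split_ifs <;> simp

theorem fderiv_apply (i j : Fin n) (x v : Fin n → ℝ) (l : Fin n) :
    fderiv ℝ (fun y => Gamma n hn i j y l) x v = Gamma n hn i j v l := by
  have hderiv := (hasFDerivAt_apply (𝕜 := ℝ) (⟨2, by omega⟩ : Fin n) x).mul_const
    (Gamma n hn i j (stdBasis n ⟨2, by omega⟩) l)
  rw [funext fun y => apply_eq_mul hn i j y l, hderiv.fderiv, apply_eq_mul hn i j v l]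
  simp only [smul_apply, ContinuousLinearMap.proj_apply, smul_eq_mul]
  ring

theorem apply_mul_apply_eq_zero (i j k m : Fin n) (x y : Fin n → ℝ) (l : Fin n) :
    Gamma n hn j k x m * Gamma n hn i m y l = 0 := by
  by_cases hm : (m : ℕ) = 1 ∨ (m : ℕ) = 3
  · have : Gamma n hn i m y l = 0 := by rw [Gamma, if_neg (by omega), if_neg (by omega)]
    rw [this, mul_zero]
  · have : Gamma n hn j k x m = 0 := by rw [Gamma, if_neg (by omega), if_neg (by omega)]
    rw [this, zero_mul]

end Gamma

theorem Rcurv_eq_sub (n : ℕ) (hn : 4 ≤ n) (i j k : Fin n) (x : Fin n → ℝ) :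
    Rcurv n hn i j k x = Gamma n hn j k (stdBasis n i) - Gamma n hn i k (stdBasis n j) := by
  funext l
  simp only [Rcurv, Gamma.fderiv_apply, Gamma.apply_mul_apply_eq_zero, Finset.sum_const_zero,
    Pi.sub_apply]
  ring

theorem Rcurv_eq_zero (n : ℕ) (hn : 4 ≤ n) (i j k : Fin n) (x : Fin n → ℝ)
    (hijk : ¬(((i : ℕ), (j : ℕ), (k : ℕ)) = (2, 0, 0) ∨ ((i : ℕ), (j : ℕ), (k : ℕ)) = (0, 2, 0) ∨
      ((i : ℕ), (j : ℕ), (k : ℕ)) = (2, 0, 2) ∨ ((i : ℕ), (j : ℕ), (k : ℕ)) = (0, 2, 2))) :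
    Rcurv n hn i j k x = 0 := by
  simp only [Prod.mk.injEq, not_or, not_and] at hijk
  rw [Rcurv_eq_sub]
  funext l
  simp only [Gamma, stdBasis, Fin.ext_iff, Pi.sub_apply, Pi.zero_apply]
  split_ifs <;> simp_all <;> omega

theorem stdBasis_ne_zero (n : ℕ) (i : Fin n) : stdBasis n i ≠ 0 := fun h => by
  simpa [stdBasis] using congrFun h i

/-- The only nonzero curvature components are (1-based) `R₍₃,₁,₁₎ = -e₄`,
`R₍₁,₃,₁₎ = e₄`, `R₍₃,₁,₃₎ = e₂`, `R₍₁,₃,₃₎ = -e₂` (here in 0-based indexing);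
in particular the curvature is nonzero at every point, so `g₀` is not flat. -/
theorem curvature_components (n : ℕ) (hn : 4 ≤ n) (x : Fin n → ℝ) :
    Rcurv n hn ⟨2, by omega⟩ ⟨0, by omega⟩ ⟨0, by omega⟩ x = -stdBasis n ⟨3, by omega⟩ ∧
    Rcurv n hn ⟨0, by omega⟩ ⟨2, by omega⟩ ⟨0, by omega⟩ x = stdBasis n ⟨3, by omega⟩ ∧
    Rcurv n hn ⟨2, by omega⟩ ⟨0, by omega⟩ ⟨2, by omega⟩ x = stdBasis n ⟨1, by omega⟩ ∧
    Rcurv n hn ⟨0, by omega⟩ ⟨2, by omega⟩ ⟨2, by omega⟩ x = -stdBasis n ⟨1, by omega⟩ ∧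
    (∀ i j k : Fin n,
      ¬(((i : ℕ), (j : ℕ), (k : ℕ)) = (2, 0, 0) ∨
        ((i : ℕ), (j : ℕ), (k : ℕ)) = (0, 2, 0) ∨
        ((i : ℕ), (j : ℕ), (k : ℕ)) = (2, 0, 2) ∨
        ((i : ℕ), (j : ℕ), (k : ℕ)) = (0, 2, 2)) →
      Rcurv n hn i j k x = 0) ∧
    (∃ i j k : Fin n, Rcurv n hn i j k x ≠ 0) := by
  have h₃₁₁ : Rcurv n hn ⟨2, by omega⟩ ⟨0, by omega⟩ ⟨0, by omega⟩ x =
      -stdBasis n ⟨3, by omega⟩ := by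
    rw [Rcurv_eq_sub]
    funext l
    simp only [Gamma, stdBasis, Fin.ext_iff, Pi.sub_apply, Pi.neg_apply]
    split_ifs <;> simp_all
  refine ⟨h₃₁₁, ?_, ?_, ?_, fun i j k => Rcurv_eq_zero n hn i j k x,
    ⟨_, _, _, h₃₁₁ ▸ neg_ne_zero.mpr (stdBasis_ne_zero n _)⟩⟩
  all_goals
    rw [Rcurv_eq_sub]
    funext l
    simp only [Gamma, stdBasis, Fin.ext_iff, Pi.sub_apply, Pi.neg_apply]
    split_ifs <;> simp_all
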